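/- arXiv:2306.10132 — 2 statements merged into one kernel-verified Lean document; each statement's English description precedes it below -/
import Mathlib

section
/- If a signed graph Σ contains a triangle whose product of edge signs is negative, then bdim(Σ) ≥ 3. -/
open Finset
open scoped Classical

/-- A signed graph: a simple graph together with a ±1 sign on each edge. -/
structure SGraph (V : Type*) where
  G : SimpleGraph V
  sign : V → V → ℤ
  sign_symm : ∀ u v, sign u v = sign v u
  sign_mem : ∀ u v, G.Adj u v → sign u v = 1 ∨ sign u v = -1

variable {V V1 V2 W : Type*}

/-- `ζ` is a positive k-switching function for the signed graph `S`. -/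
def IsPosSwitching [Fintype V] (S : SGraph V) (k : ℕ) (ζ : V → Fin k → ℤ) : Prop :=
  (∀ v i, ζ v i = -1 ∨ ζ v i = 0 ∨ ζ v i = 1) ∧
  (∀ u v, S.G.Adj u v → (∑ i, ζ u i * ζ v i) ≠ 0) ∧
  (∀ u v, S.G.Adj u v → S.sign u v * Int.sign (∑ i, ζ u i * ζ v i) = 1)

def HasPosSwitching [Fintype V] (S : SGraph V) (k : ℕ) : Prop :=
  ∃ ζ : V → Fin k → ℤ, IsPosSwitching S k ζ

/-- The balancing dimension: least `k ≥ 1` admitting a positive k-switching function. -/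
noncomputable def bdim [Fintype V] (S : SGraph V) : ℕ :=
  sInf {k | 1 ≤ k ∧ HasPosSwitching S k}

/-- A signed graph is balanced iff it can be switched to all-positive by a 1-switching. -/
def SGraph.Balanced [Fintype V] (S : SGraph V) : Prop := HasPosSwitching S 1

/-- The negation of a signed graph. -/
def SGraph.neg (S : SGraph V) : SGraph V where
  G := S.G
  sign := fun u v => - S.sign u v
  sign_symm := fun u v => by rw [S.sign_symm]
  sign_mem := fun u v h => by rcases S.sign_mem u v h with h1 | h1 <;> simp [h1]

def SGraph.Antibalanced [Fintype V] (S : SGraph V) : Prop := S.neg.Balanced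

/-- Switching equivalence of signed graphs. -/
def SwitchEquiv (S1 S2 : SGraph V) : Prop :=
  S1.G = S2.G ∧ ∃ η : V → ℤ, (∀ v, η v = 1 ∨ η v = -1) ∧
    ∀ u v, S1.G.Adj u v → S2.sign u v = η u * S1.sign u v * η v

/-- The Cartesian product of signed graphs. -/
noncomputable def cartProd (S1 : SGraph V1) (S2 : SGraph V2) : SGraph (V1 × V2) where
  G := S1.G □ S2.G
  sign := fun p q => if p.2 = q.2 then S1.sign p.1 q.1 else S2.sign p.2 q.2
  sign_symm := by
    intro u v
    rcases eq_or_ne u.2 v.2 with h | h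
    · rw [if_pos h, if_pos h.symm, S1.sign_symm]
    · rw [if_neg h, if_neg (Ne.symm h), S2.sign_symm]
  sign_mem := by
    intro u v h
    rcases (SimpleGraph.boxProd_adj.mp h) with ⟨h1, h2⟩ | ⟨h1, h2⟩
    · rw [if_pos h2]; exact S1.sign_mem _ _ h1
    · rw [if_neg h1.ne]; exact S2.sign_mem _ _ h1
/-- The HG-lexicographic product of signed graphs. -/
noncomputable def lexHG (S1 : SGraph V1) (S2 : SGraph V2) : SGraph (V1 × V2) where
  G := { Adj := fun p q => S1.G.Adj p.1 q.1 ∨ (p.1 = q.1 ∧ S2.G.Adj p.2 q.2)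
         symm := by
           constructor
           rintro p q (h | ⟨h1, h2⟩)
           · exact Or.inl h.symm
           · exact Or.inr ⟨h1.symm, h2.symm⟩
         loopless := by
           constructor
           rintro p (h | ⟨_, h⟩)
           · exact S1.G.irrefl h
           · exact S2.G.irrefl h }
  sign := fun p q => if p.1 = q.1 then S2.sign p.2 q.2 else S1.sign p.1 q.1
  sign_symm := by
    intro u v
    rcases eq_or_ne u.1 v.1 with h | h
    · rw [if_pos h, if_pos h.symm, S2.sign_symm]
    · rw [if_neg h, if_neg (Ne.symm h), S1.sign_symm]
  sign_mem := by
    rintro p q (h | ⟨h1, h2⟩)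
    · rw [if_neg h.ne]; exact S1.sign_mem _ _ h
    · rw [if_pos h1]; exact S2.sign_mem _ _ h2

/-- The BCD-lexicographic product of signed graphs. -/
noncomputable def lexBCD (S1 : SGraph V1) (S2 : SGraph V2) : SGraph (V1 × V2) where
  G := { Adj := fun p q => S1.G.Adj p.1 q.1 ∨ (p.1 = q.1 ∧ S2.G.Adj p.2 q.2)
         symm := by
           constructor
           rintro p q (h | ⟨h1, h2⟩)
           · exact Or.inl h.symm
           · exact Or.inr ⟨h1.symm, h2.symm⟩
         loopless := by
           constructor
           rintro p (h | ⟨_, h⟩)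
           · exact S1.G.irrefl h
           · exact S2.G.irrefl h }
  sign := fun p q =>
    if S2.G.Adj p.2 q.2 then
      (if S1.G.Adj p.1 q.1 then S1.sign p.1 q.1 * S2.sign p.2 q.2 else S2.sign p.2 q.2)
    else S1.sign p.1 q.1
  sign_symm := by
    intro u v
    rw [S1.G.adj_comm v.1 u.1, S2.G.adj_comm v.2 u.2, S1.sign_symm v.1 u.1,
      S2.sign_symm v.2 u.2]
  sign_mem := by
    rintro p q (h | ⟨h1, h2⟩)
    · by_cases h2 : S2.G.Adj p.2 q.2
      · rw [if_pos h2, if_pos h]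
        rcases S1.sign_mem _ _ h with e1 | e1 <;> rcases S2.sign_mem _ _ h2 with e2 | e2 <;>
          simp [e1, e2]
      · rw [if_neg h2]; exact S1.sign_mem _ _ h
    · rw [if_pos h2, if_neg (h1 ▸ S1.G.irrefl)]
      exact S2.sign_mem _ _ h2

/-- The tensor product of signed graphs. -/
def tensorProd (S1 : SGraph V1) (S2 : SGraph V2) : SGraph (V1 × V2) where
  G := { Adj := fun p q => S1.G.Adj p.1 q.1 ∧ S2.G.Adj p.2 q.2
         symm := ⟨fun p q ⟨h1, h2⟩ => ⟨h1.symm, h2.symm⟩⟩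
         loopless := ⟨fun p ⟨h1, _⟩ => S1.G.irrefl h1⟩ }
  sign := fun p q => S1.sign p.1 q.1 * S2.sign p.2 q.2
  sign_symm := by
    intro u v
    rw [S1.sign_symm, S2.sign_symm]
  sign_mem := by
    rintro p q ⟨h1, h2⟩
    rcases S1.sign_mem _ _ h1 with e1 | e1 <;> rcases S2.sign_mem _ _ h2 with e2 | e2 <;>
      simp [e1, e2]

/-- The strong product of signed graphs. -/
noncomputable def strongProd (S1 : SGraph V1) (S2 : SGraph V2) : SGraph (V1 × V2) where
  G := { Adj := fun p q => (S1.G.Adj p.1 q.1 ∧ p.2 = q.2) ∨ (p.1 = q.1 ∧ S2.G.Adj p.2 q.2) ∨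
           (S1.G.Adj p.1 q.1 ∧ S2.G.Adj p.2 q.2)
         symm := by
           constructor
           rintro p q (⟨h1, h2⟩ | ⟨h1, h2⟩ | ⟨h1, h2⟩)
           · exact Or.inl ⟨h1.symm, h2.symm⟩
           · exact Or.inr (Or.inl ⟨h1.symm, h2.symm⟩)
           · exact Or.inr (Or.inr ⟨h1.symm, h2.symm⟩)
         loopless := by
           constructor
           rintro p (⟨h1, _⟩ | ⟨_, h2⟩ | ⟨h1, _⟩)
           · exact S1.G.irrefl h1
           · exact S2.G.irrefl h2
           · exact S1.G.irrefl h1 }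
  sign := fun p q =>
    if p.1 = q.1 then S2.sign p.2 q.2
    else if p.2 = q.2 then S1.sign p.1 q.1
    else S1.sign p.1 q.1 * S2.sign p.2 q.2
  sign_symm := by
    intro u v
    rcases eq_or_ne u.1 v.1 with h | h
    · rw [if_pos h, if_pos h.symm, S2.sign_symm]
    · rw [if_neg h, if_neg (Ne.symm h)]
      rcases eq_or_ne u.2 v.2 with h' | h'
      · rw [if_pos h', if_pos h'.symm, S1.sign_symm]
      · rw [if_neg h', if_neg (Ne.symm h'), S1.sign_symm, S2.sign_symm]
  sign_mem := by
    rintro p q (⟨h1, h2⟩ | ⟨h1, h2⟩ | ⟨h1, h2⟩)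
    · rw [if_neg h1.ne, if_pos h2]; exact S1.sign_mem _ _ h1
    · rw [if_pos h1]; exact S2.sign_mem _ _ h2
    · rw [if_neg h1.ne, if_neg h2.ne]
      rcases S1.sign_mem _ _ h1 with e1 | e1 <;> rcases S2.sign_mem _ _ h2 with e2 | e2 <;>
        simp [e1, e2]
/-- The cycle on `ZMod n` (vertices `0,1,…,n-1`) with the single negative edge `{0,1}`. -/
noncomputable def Cneg (n : ℕ) : SGraph (ZMod n) where
  G := { Adj := fun i j => i ≠ j ∧ (i - j = 1 ∨ j - i = 1)
         symm := ⟨fun i j ⟨h1, h2⟩ => ⟨h1.symm, h2.symm⟩⟩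
         loopless := ⟨fun i ⟨h1, _⟩ => h1 rfl⟩ }
  sign := fun i j => if (i = 0 ∧ j = 1) ∨ (i = 1 ∧ j = 0) then -1 else 1
  sign_symm := by
    intro u v
    exact if_congr (by tauto) rfl rfl
  sign_mem := by
    intro u v _
    by_cases h : (u = 0 ∧ v = 1) ∨ (u = 1 ∧ v = 0)
    · rw [if_pos h]; exact Or.inr rfl
    · rw [if_neg h]; exact Or.inl rfl

/-- The all-negative complete signed graph on `n` vertices. -/
def Kneg (n : ℕ) : SGraph (Fin n) where
  G := ⊤
  sign := fun _ _ => -1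
  sign_symm := fun _ _ => rfl
  sign_mem := fun _ _ _ => Or.inr rfl

/-- The edgeless signed graph on `k` vertices. -/
def Nk (k : ℕ) : SGraph (Fin k) where
  G := ⊥
  sign := fun _ _ => 1
  sign_symm := fun _ _ => rfl
  sign_mem := fun _ _ h => (h.elim)

/-- The lexicographic product of simple graphs. -/
def lexProdGraph (G : SimpleGraph V1) (H : SimpleGraph V2) : SimpleGraph (V1 × V2) where
  Adj p q := G.Adj p.1 q.1 ∨ (p.1 = q.1 ∧ H.Adj p.2 q.2)
  symm := by
    constructor
    rintro p q (h | ⟨h1, h2⟩)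
    · exact Or.inl h.symm
    · exact Or.inr ⟨h1.symm, h2.symm⟩
  loopless := by
    constructor
    rintro p (h | ⟨_, h⟩)
    · exact G.irrefl h
    · exact H.irrefl h

/-!
A positive `k`-switching `ζ` realizes the sign of every edge `uv` as the sign of `⟨ζ u, ζ v⟩`,
so on a negative triangle `abc` the product `⟨ζ a, ζ b⟩⟨ζ b, ζ c⟩⟨ζ c, ζ a⟩` is negative. For
vectors in `{-1, 0, 1}^k` with `k ≤ 2` this product is never negative: for `k = 1` it is a
square, for `k = 2` a finite check. Since `bdim` is an infimum, some positive switching must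
also exist; one coordinate per ordered edge suffices.
-/

open Matrix

theorem dotProduct_mul_dotProduct_mul_dotProduct_nonneg {k : ℕ} (hk : k ≤ 2) {x y z : Fin k → ℤ}
    (hx : ∀ i, x i = -1 ∨ x i = 0 ∨ x i = 1) (hy : ∀ i, y i = -1 ∨ y i = 0 ∨ y i = 1)
    (hz : ∀ i, z i = -1 ∨ z i = 0 ∨ z i = 1) :
    0 ≤ x ⬝ᵥ y * (y ⬝ᵥ z) * (z ⬝ᵥ x) := by
  interval_cases k
  · simp
  · have h : x ⬝ᵥ y * (y ⬝ᵥ z) * (z ⬝ᵥ x) = (x 0 * y 0 * z 0) ^ 2 := by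
      simp only [dotProduct, Fin.sum_univ_one]; ring
    exact h ▸ sq_nonneg _
  · simp only [vec2_dotProduct]
    rcases hx 0 with h | h | h <;> rw [h] <;> rcases hx 1 with h | h | h <;> rw [h] <;>
      rcases hy 0 with h | h | h <;> rw [h] <;> rcases hy 1 with h | h | h <;> rw [h] <;>
      rcases hz 0 with h | h | h <;> rw [h] <;> rcases hz 1 with h | h | h <;> rw [h] <;> decide

section

variable [Fintype V] {S : SGraph V} {k : ℕ} {ζ : V → Fin k → ℤ}

theorem IsPosSwitching.sign_dotProduct (hζ : IsPosSwitching S k ζ) {u v : V}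
    (huv : S.G.Adj u v) : (ζ u ⬝ᵥ ζ v).sign = S.sign u v :=
  (Int.eq_of_mul_eq_one (hζ.2.2 u v huv)).symm

theorem IsPosSwitching.three_le_of_neg_triangle (hζ : IsPosSwitching S k ζ) {a b c : V}
    (hab : S.G.Adj a b) (hbc : S.G.Adj b c) (hca : S.G.Adj c a)
    (hneg : S.sign a b * S.sign b c * S.sign c a = -1) : 3 ≤ k := by
  by_contra! hk
  have hsign : (ζ a ⬝ᵥ ζ b * (ζ b ⬝ᵥ ζ c) * (ζ c ⬝ᵥ ζ a)).sign = -1 := by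
    rw [Int.sign_mul, Int.sign_mul, hζ.sign_dotProduct hab, hζ.sign_dotProduct hbc,
      hζ.sign_dotProduct hca, hneg]
  exact (Int.sign_eq_neg_one_iff_neg.mp hsign).not_ge
    (dotProduct_mul_dotProduct_mul_dotProduct_nonneg (by omega) (hζ.1 a) (hζ.1 b) (hζ.1 c))

end

namespace SGraph

/-- Each ordered edge `(x, y)` gets a coordinate, where `x` carries `1` and `y` carries `σ(xy)`.
Adjacent `u, v` share exactly the coordinates `(u, v)` and `(v, u)`, so their inner product is
`2 σ(uv)`. -/
noncomputable def edgeSwitching (S : SGraph V) (v : V) (p : V × V) : ℤ :=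
  if S.G.Adj p.1 p.2 then (if v = p.1 then 1 else if v = p.2 then S.sign p.1 p.2 else 0) else 0

theorem edgeSwitching_mem (S : SGraph V) (v : V) (p : V × V) :
    S.edgeSwitching v p = -1 ∨ S.edgeSwitching v p = 0 ∨ S.edgeSwitching v p = 1 := by
  unfold edgeSwitching
  split_ifs with hp
  · exact Or.inr (Or.inr rfl)
  · rcases S.sign_mem _ _ hp with h | h <;> simp [h]
  all_goals exact Or.inr (Or.inl rfl)

variable [Fintype V]

theorem edgeSwitching_dotProduct (S : SGraph V) {u v : V} (huv : S.G.Adj u v) :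
    S.edgeSwitching u ⬝ᵥ S.edgeSwitching v = 2 * S.sign u v := by
  rw [dotProduct, Fintype.sum_eq_add (u, v) (v, u) (by simp [huv.ne])]
  · simp only [edgeSwitching, huv, huv.symm, huv.ne, huv.ne.symm, S.sign_symm v u, ↓reduceIte,
      one_mul, mul_one]
    ring
  · rintro ⟨x, y⟩ hp
    simp only [ne_eq, Prod.mk.injEq] at hp
    unfold edgeSwitching
    split_ifs <;> simp_all

theorem hasPosSwitching_card_prod (S : SGraph V) :
    HasPosSwitching S (Fintype.card (V × V)) := by
  let e := (Fintype.equivFin (V × V)).symm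
  have hdot : ∀ u v, (S.edgeSwitching u ∘ e) ⬝ᵥ (S.edgeSwitching v ∘ e) =
      S.edgeSwitching u ⬝ᵥ S.edgeSwitching v := fun u v =>
    e.sum_comp fun p => S.edgeSwitching u p * S.edgeSwitching v p
  refine ⟨fun v => S.edgeSwitching v ∘ e, fun v i => S.edgeSwitching_mem v (e i),
    fun u v huv => ?_, fun u v huv => ?_⟩ <;>
    rw [← dotProduct, hdot, S.edgeSwitching_dotProduct huv] <;>
    rcases S.sign_mem u v huv with h | h <;> simp [h]

end SGraph

theorem stmt5 [Fintype V] (S : SGraph V) (a b c : V)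
    (hab : S.G.Adj a b) (hbc : S.G.Adj b c) (hca : S.G.Adj c a)
    (hneg : S.sign a b * S.sign b c * S.sign c a = -1) :
    3 ≤ bdim S :=
  le_csInf ⟨_, Fintype.card_pos_iff.mpr ⟨(a, a)⟩, S.hasPosSwitching_card_prod⟩
    fun _ ⟨_, _, hζ⟩ => hζ.three_le_of_neg_triangle hab hbc hca hneg
end

section
/- If signed graphs Σ₁ and Σ₁' are switching equivalent, then the HG-lexicographic products Σ₁[Σ₂] and Σ₁'[Σ₂] are switching equivalent, for any signed graph Σ₂. -/
open Finset
open scoped Classical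

variable {V V1 V2 W : Type*}

lemma mul_mul_self_of_eq_one_or_eq_neg_one {η : ℤ} (hη : η = 1 ∨ η = -1) (s : ℤ) :
    η * s * η = s := by
  rcases hη with rfl | rfl <;> ring

lemma lexHG_graph_eq_of_graph_eq {S1 S1' : SGraph V1} (S2 : SGraph V2) (hG : S1.G = S1'.G) :
    (lexHG S1 S2).G = (lexHG S1' S2).G := by
  ext p q
  simp only [lexHG, hG]

lemma lexHG_sign_of_fst_adj (S1 : SGraph V1) (S2 : SGraph V2) {p q : V1 × V2}
    (h : S1.G.Adj p.1 q.1) : (lexHG S1 S2).sign p q = S1.sign p.1 q.1 := by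
  simp only [lexHG, if_neg h.ne]

lemma lexHG_sign_of_fst_eq (S1 : SGraph V1) (S2 : SGraph V2) {p q : V1 × V2}
    (h : p.1 = q.1) : (lexHG S1 S2).sign p q = S2.sign p.2 q.2 := by
  simp only [lexHG, if_pos h]

/- Switch the product by `η ∘ Prod.fst`: edges between fibres carry the signs of `S1`, and
inside a fibre both ends get the same `η u`, whose square is `1`. -/
theorem stmt10 (S1 S1' : SGraph V1) (S2 : SGraph V2)
    (h : SwitchEquiv S1 S1') : SwitchEquiv (lexHG S1 S2) (lexHG S1' S2) := by
  obtain ⟨hG, η, hη, hsw⟩ := h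
  refine ⟨lexHG_graph_eq_of_graph_eq S2 hG, fun p => η p.1, fun p => hη p.1, ?_⟩
  rintro p q (hadj | ⟨hfst, -⟩)
  · rw [lexHG_sign_of_fst_adj _ _ hadj, lexHG_sign_of_fst_adj _ _ (hG ▸ hadj)]
    exact hsw _ _ hadj
  · rw [lexHG_sign_of_fst_eq _ _ hfst, lexHG_sign_of_fst_eq _ _ hfst]
    show _ = η p.1 * _ * η q.1
    rw [← hfst, mul_mul_self_of_eq_one_or_eq_neg_one (hη p.1)]
end
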